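/- In the W[1]-hardness program P_G, in any sequentially consistent interleaving, the checker threads execute in order: all events of Checker_1 precede all events of Checker_2, which precede all of Checker_3, and so on up to Checker_k. -/

import Mathlib

/-- Memory events: reads and writes of natural-number values to variables of type `V`. -/
inductive Event (V : Type) where
  | read  (x : V) (d : ℕ)
  | write (x : V) (d : ℕ)
deriving DecidableEq

variable {V ι : Type}

/-- A sequence of events is sequentially consistent (SC): every read `r(x,d)` has a
preceding write `w(x,d)` with no write of a different value to `x` in between. -/
def SC (σ : List (Event V)) : Prop :=
  ∀ (p : ℕ) x d, σ[p]? = some (Event.read x d) →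
    ∃ q : ℕ, q < p ∧ σ[q]? = some (Event.write x d) ∧
      ∀ r, q < r → r < p → ∀ d', d' ≠ d → σ[r]? ≠ some (Event.write x d')

/-- `σ` is an interleaving of the given threads: its restriction to each
thread identifier equals that thread's event sequence. -/
def IsInterleaving [DecidableEq ι] (threads : ι → List (Event V)) (σ : List (ι × Event V)) : Prop :=
  ∀ i, σ.filterMap (fun a => if a.1 = i then some a.2 else none) = threads i

/-- A preemption occurs at position `j`: the events at `j` and `j+1` are from
different threads and the event at `j` is not the last event of its thread. -/
def PreemptionAt (σ : List (ι × Event V)) (j : ℕ) : Prop :=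
  ∃ a b, σ[j]? = some a ∧ σ[j + 1]? = some b ∧ a.1 ≠ b.1 ∧
    ∃ r c, j < r ∧ σ[r]? = some c ∧ c.1 = a.1

open Classical in
/-- The number of preemption positions of `σ`. -/
noncomputable def numPreemptions (σ : List (ι × Event V)) : ℕ :=
  ((Finset.range σ.length).filter fun j => PreemptionAt σ j).card

open Classical in
/-- The number of context switches of `σ` (adjacent events of different threads). -/
noncomputable def numSwitches (σ : List (ι × Event V)) : ℕ :=
  ((Finset.range σ.length).filter fun j =>
    ∃ a b, σ[j]? = some a ∧ σ[j + 1]? = some b ∧ a.1 ≠ b.1).card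

/-- The (increasing) list of positions of `σ` carrying events of thread `i`. -/
def threadPositions [DecidableEq ι] (σ : List (ι × Event V)) (i : ι) : List ℕ :=
  (List.range σ.length).filter fun p => decide ((σ[p]?).map Prod.fst = some i)

/-- The position in `σ` of the `j`-th event of thread `i`. -/
def posOf [DecidableEq ι] (σ : List (ι × Event V)) (i : ι) (j : ℕ) : ℕ :=
  (threadPositions σ i).getD j 0

/-- All events of thread `t` occur before all events of thread `t'` in `σ`. -/
def ThreadBefore [DecidableEq ι] (σ : List (ι × Event V)) (t t' : ι) : Prop :=
  ∀ p ∈ threadPositions σ t, ∀ q ∈ threadPositions σ t', p < q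

/-- The event is a write to variable `x`. -/
def writesTo (x : V) : Event V → Prop
  | Event.write y _ => y = x
  | _ => False

/-- A 1-writer program: for each variable, a single thread performs all writes to it. -/
def OneWriter (threads : ι → List (Event V)) : Prop :=
  ∀ x i i', (∃ e ∈ threads i, writesTo x e) → (∃ e ∈ threads i', writesTo x e) → i = i'

/-- The events of thread `i` from its index `s` onwards appear contiguously in `σ`. -/
def ContiguousFrom [DecidableEq ι] (σ : List (ι × Event V)) (i : ι) (s : ℕ) : Prop :=
  ∀ j, s ≤ j → j + 1 < (threadPositions σ i).length → posOf σ i (j + 1) = posOf σ i j + 1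

/-- Conflict-graph edge `tr → tw` between outer blocks (suffixes of the threads
starting at indices `s tr`, `s tw`): the last write to some variable `x` in the
outer block of `tw` conflicts with a read of `x` in the outer block of `tr`. -/
def ConflictEdge [DecidableEq ι] (threads : ι → List (Event V)) (s : ι → ℕ) (tr tw : ι) : Prop :=
  tr ≠ tw ∧ ∃ x d d' jr jw, d ≠ d' ∧
    s tr ≤ jr ∧ (threads tr)[jr]? = some (Event.read x d) ∧
    s tw ≤ jw ∧ (threads tw)[jw]? = some (Event.write x d') ∧
    ∀ j d'', jw < j → (threads tw)[j]? ≠ some (Event.write x d'')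

/-- Splitting a list into contiguous blocks immediately after each position in `cut`. -/
def splitAtCuts {α : Type} (l : List α) (cut : Finset ℕ) : List (List α) :=
  let cs := cut.sort (· ≤ ·)
  ((0 :: cs.map (· + 1)).zip (cs.map (· + 1) ++ [l.length])).map fun p => (l.take p.2).drop p.1


/-- Variables of the W[1]-hardness reduction program `P_G`. -/
inductive GVar (α : Type) (k : ℕ) where
  | y (e : Sym2 α)
  | x (j : Fin k)
  | s
  | p (j : ℕ)
deriving DecidableEq

/-- Thread identifiers of `P_G`. -/
inductive GTId (k : ℕ) where
  | init
  | checker (j : Fin k)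
  | sel (j : Fin k)
deriving DecidableEq

variable {α : Type} [Fintype α] [DecidableEq α]

/-- The list of edges of `G` incident on `v`. -/
noncomputable def incEdges (G : SimpleGraph α) [DecidableRel G.Adj] (v : α) : List (Sym2 α) :=
  (G.edgeFinset.filter fun e => v ∈ e).toList

/-- The `Init` thread of `P_G`. -/
noncomputable def initThread (G : SimpleGraph α) [DecidableRel G.Adj] (k : ℕ) :
    List (Event (GVar α k)) :=
  (G.edgeFinset.toList.map fun e => Event.write (GVar.y e) 0) ++
  ((List.finRange k).map fun j => Event.write (GVar.x j) 1) ++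
  [Event.write GVar.s 1, Event.write (GVar.p 0) 1]

/-- The thread `Checker_j` of `P_G`. -/
def checkerThread {k : ℕ} (j : Fin k) : List (Event (GVar α k)) :=
  [Event.read (GVar.p j.val) 1] ++
  (if j.val + 1 ≠ k then [Event.write GVar.s 0] else []) ++
  [Event.read (GVar.x j) 0] ++
  (if j.val + 1 = k then [Event.write GVar.s 1] else []) ++
  [Event.write (GVar.p (j.val + 1)) 1]

/-- The block `B_v^j` of selector thread `Sel_j` for vertex `v`. -/
noncomputable def selBlock (G : SimpleGraph α) [DecidableRel G.Adj] {k : ℕ} (j : Fin k) (v : α) :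
    List (Event (GVar α k)) :=
  ((incEdges G v).flatMap fun e => [Event.read (GVar.y e) 0, Event.write (GVar.y e) (j.val + 1)]) ++
  [Event.read GVar.s 1, Event.write (GVar.x j) 0, Event.write (GVar.x j) 1] ++
  ((incEdges G v).flatMap fun e => [Event.read (GVar.y e) (j.val + 1), Event.write (GVar.y e) 0])

/-- The selector thread `Sel_j` of `P_G`: one block per vertex of `G`. -/
noncomputable def selThread (G : SimpleGraph α) [DecidableRel G.Adj] {k : ℕ} (j : Fin k) :
    List (Event (GVar α k)) :=
  (Finset.univ : Finset α).toList.flatMap (selBlock G j)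

/-- The program `P_G` of the W[1]-hardness reduction with parameter `k`. -/
noncomputable def pgThreads (G : SimpleGraph α) [DecidableRel G.Adj] (k : ℕ) :
    GTId k → List (Event (GVar α k))
  | GTId.init => initThread G k
  | GTId.checker j => checkerThread j
  | GTId.sel j => selThread G j

/-! `Checker_{j+1}` starts by reading `p_{j+1} = 1`. Under SC that read is preceded by a write
of `1` to `p_{j+1}`, and the only such write is the last event of `Checker_j`; so `Checker_j`
has finished before `Checker_{j+1}` starts. Chaining these handoffs gives the claim. -/

section Interleaving

variable [DecidableEq ι]

def threadEvents (σ : List (ι × Event V)) (t : ι) : List (Event V) :=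
  σ.filterMap fun a => if a.1 = t then some a.2 else none

theorem threadEvents_cons (a : ι × Event V) (σ : List (ι × Event V)) (t : ι) :
    threadEvents (a :: σ) t = (if a.1 = t then [a.2] else []) ++ threadEvents σ t := by
  by_cases h : a.1 = t <;> simp [threadEvents, h]

theorem threadPositions_cons (a : ι × Event V) (σ : List (ι × Event V)) (t : ι) :
    threadPositions (a :: σ) t =
      (if a.1 = t then [0] else []) ++ (threadPositions σ t).map (· + 1) := by
  unfold threadPositions
  rw [List.length_cons, List.range_succ_eq_map, List.filter_cons, List.filter_map]
  by_cases h : a.1 = t <;> simp [h, Function.comp_def]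

theorem mem_threadPositions {σ : List (ι × Event V)} {t : ι} {p : ℕ} :
    p ∈ threadPositions σ t ↔ ∃ e, σ[p]? = some (t, e) := by
  simpa [threadPositions] using fun _ h => (List.getElem?_eq_some_iff.1 h).1

theorem sortedLT_threadPositions (σ : List (ι × Event V)) (t : ι) :
    (threadPositions σ t).SortedLT :=
  List.sortedLT_iff_pairwise.2 <| List.pairwise_lt_range.filter _

theorem getElem_zero_threadPositions_le {σ : List (ι × Event V)} {t : ι} {p : ℕ}
    (hp : p ∈ threadPositions σ t) (h0 : 0 < (threadPositions σ t).length) :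
    (threadPositions σ t)[0] ≤ p := by
  obtain ⟨n, hn, rfl⟩ := List.mem_iff_getElem.1 hp
  exact (sortedLT_threadPositions σ t).getElem_le_getElem_iff.2 n.zero_le

theorem length_threadPositions (σ : List (ι × Event V)) (t : ι) :
    (threadPositions σ t).length = (threadEvents σ t).length := by
  induction σ with
  | nil => rfl
  | cons a σ ih =>
    rw [threadPositions_cons, threadEvents_cons]
    split_ifs <;> simp [ih]

theorem getElem?_getElem_threadPositions (σ : List (ι × Event V)) (t : ι) {m : ℕ}
    (hm : m < (threadPositions σ t).length) :
    σ[(threadPositions σ t)[m]]? = (threadEvents σ t)[m]?.map (t, ·) := by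
  induction σ generalizing m with
  | nil => simp [threadPositions] at hm
  | cons a σ ih =>
    simp only [threadPositions_cons, threadEvents_cons] at hm ⊢
    obtain ⟨s, e⟩ := a
    by_cases h : s = t
    · subst h
      cases m with
      | zero => simp
      | succ m =>
        simp only [if_true, List.singleton_append, List.length_cons, List.length_map] at hm
        simpa using ih (by omega)
    · simp only [h, if_false, List.nil_append, List.length_map] at hm
      simpa [h] using ih hm

theorem ThreadBefore.trans {σ : List (ι × Event V)} {t₁ t₂ t₃ : ι}
    (h₁₂ : ThreadBefore σ t₁ t₂) (h₂₃ : ThreadBefore σ t₂ t₃)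
    (hne : threadPositions σ t₂ ≠ []) : ThreadBefore σ t₁ t₃ := by
  obtain ⟨r, hr⟩ := List.exists_mem_of_ne_nil _ hne
  exact fun p hp q hq => (h₁₂ p hp r hr).trans (h₂₃ r hr q hq)

namespace IsInterleaving

variable {threads : ι → List (Event V)} {σ : List (ι × Event V)}

theorem length_threadPositions (hσ : IsInterleaving threads σ) (t : ι) :
    (threadPositions σ t).length = (threads t).length :=
  (_root_.length_threadPositions σ t).trans (congrArg List.length (hσ t))

theorem getElem?_getElem_threadPositions (hσ : IsInterleaving threads σ) (t : ι) {m : ℕ}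
    (hm : m < (threadPositions σ t).length) :
    σ[(threadPositions σ t)[m]]? = (threads t)[m]?.map (t, ·) :=
  (_root_.getElem?_getElem_threadPositions σ t hm).trans (by rw [← hσ t]; rfl)

theorem mem_of_getElem?_eq (hσ : IsInterleaving threads σ) {q : ℕ} {t : ι} {e : Event V}
    (hq : σ[q]? = some (t, e)) : e ∈ threads t := by
  rw [← hσ t]
  exact List.mem_filterMap.2 ⟨(t, e), List.mem_of_getElem? hq, by simp⟩

theorem le_of_getElem?_eq_last (hσ : IsInterleaving threads σ) {p q : ℕ} {t : ι} {e : Event V}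
    (hq : σ[q]? = some (t, e))
    (hlast : ∀ m, (threads t)[m]? = some e → m + 1 = (threads t).length)
    (hp : p ∈ threadPositions σ t) : p ≤ q := by
  obtain ⟨m, hm, rfl⟩ := List.mem_iff_getElem.1 (mem_threadPositions.2 ⟨e, hq⟩)
  obtain ⟨n, hn, rfl⟩ := List.mem_iff_getElem.1 hp
  have hme : (threads t)[m]? = some e := by
    rw [hσ.getElem?_getElem_threadPositions t hm] at hq
    obtain ⟨e', he', he⟩ := Option.map_eq_some_iff.1 hq
    rwa [(Prod.mk.inj he).2] at he'
  have := hlast m hme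
  rw [← hσ.length_threadPositions] at this
  exact (sortedLT_threadPositions σ t).getElem_le_getElem_iff.2 (by omega)

theorem threadBefore_of_read_first_of_write_last (hσ : IsInterleaving threads σ)
    (hsc : SC (σ.map Prod.snd)) {t t' : ι} {x : V} {d : ℕ}
    (hread : (threads t')[0]? = some (Event.read x d))
    (howner : ∀ s, Event.write x d ∈ threads s → s = t)
    (hlast : ∀ m, (threads t)[m]? = some (Event.write x d) → m + 1 = (threads t).length) :
    ThreadBefore σ t t' := by
  intro p hp q hq
  have h0 : 0 < (threadPositions σ t').length := by
    rw [hσ.length_threadPositions]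
    exact (List.getElem?_eq_some_iff.1 hread).1
  set r := (threadPositions σ t')[0]
  have hr : (σ.map Prod.snd)[r]? = some (Event.read x d) := by
    rw [List.getElem?_map, hσ.getElem?_getElem_threadPositions t' h0, hread]
    rfl
  obtain ⟨w, hwr, hw, -⟩ := hsc r x d hr
  rw [List.getElem?_map] at hw
  obtain ⟨⟨s, e⟩, hs, rfl⟩ := Option.map_eq_some_iff.1 hw
  obtain rfl := howner s (hσ.mem_of_getElem?_eq hs)
  calc p ≤ w := hσ.le_of_getElem?_eq_last hs hlast hp
    _ < r := hwr
    _ ≤ q := getElem_zero_threadPositions_le hq h0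

end IsInterleaving

end Interleaving

section Checkers

variable {k : ℕ}

theorem length_checkerThread {β : Type} (i : Fin k) : (checkerThread (α := β) i).length = 4 := by
  by_cases h : i.val + 1 = k <;> simp [checkerThread, h]

theorem checkerThread_getElem?_zero {β : Type} (i : Fin k) :
    (checkerThread (α := β) i)[0]? = some (Event.read (GVar.p i.val) 1) := by
  by_cases h : i.val + 1 = k <;> simp [checkerThread, h]

theorem checkerThread_getElem?_eq_write_p_iff {β : Type} (i : Fin k) (m : ℕ) :
    (checkerThread (α := β) i)[m]? = some (Event.write (GVar.p (i.val + 1)) 1) ↔ m = 3 := by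
  by_cases h : i.val + 1 = k <;> rcases m with _ | _ | _ | _ | m <;> simp [checkerThread, h]

theorem eq_checker_of_write_p_mem (G : SimpleGraph α) [DecidableRel G.Adj] {t : GTId k}
    {i : Fin k} (he : Event.write (GVar.p (i.val + 1)) 1 ∈ pgThreads G k t) :
    t = GTId.checker i := by
  cases t with
  | init => simp [pgThreads, initThread] at he
  | checker j =>
    by_cases h : j.val + 1 = k <;> simp [pgThreads, checkerThread, h] at he
    all_goals exact congrArg GTId.checker (Fin.ext (by omega))
  | sel j => simp [pgThreads, selThread, selBlock] at he

theorem checker_before_succ {G : SimpleGraph α} [DecidableRel G.Adj]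
    {σ : List (GTId k × Event (GVar α k))} (hσ : IsInterleaving (pgThreads G k) σ)
    (hsc : SC (σ.map Prod.snd)) (i : Fin k) (hi : i.val + 1 < k) :
    ThreadBefore σ (GTId.checker i) (GTId.checker ⟨i.val + 1, hi⟩) :=
  hσ.threadBefore_of_read_first_of_write_last hsc (checkerThread_getElem?_zero _)
    (fun _ => eq_checker_of_write_p_mem G)
    (fun m hm => by
      simp only [pgThreads, checkerThread_getElem?_eq_write_p_iff] at hm ⊢
      rw [length_checkerThread, hm])

end Checkers

/-- in any SC interleaving of `P_G`, the checker threads execute in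
order: all events of `Checker_i` precede all events of `Checker_j` for `i < j`. -/
theorem stmt13 (G : SimpleGraph α) [DecidableRel G.Adj] (k : ℕ)
    (σ : List (GTId k × Event (GVar α k)))
    (hσ : IsInterleaving (pgThreads G k) σ)
    (hsc : SC (σ.map Prod.snd))
    (i j : Fin k) (hij : i < j) :
    ThreadBefore σ (GTId.checker i) (GTId.checker j) := by
  obtain ⟨i, hi⟩ := i
  obtain ⟨j, hj⟩ := j
  replace hij : i + 1 ≤ j := hij
  induction j, hij using Nat.le_induction with
  | base => exact checker_before_succ hσ hsc ⟨i, hi⟩ hj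
  | succ j hij ih =>
    have hne : threadPositions σ (GTId.checker ⟨j, by omega⟩) ≠ [] := by
      rw [← List.length_pos_iff, hσ.length_threadPositions]
      simp [pgThreads, length_checkerThread]
    exact (ih (by omega)).trans (checker_before_succ hσ hsc _ hj) hne
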